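/- arXiv:1607.02340 — 3 statements merged into one kernel-verified Lean document; each statement's English description precedes it below -/
import Mathlib

section
/- For any fixed p ∈ ℝ^n, if χ₁ is a corrector for (p, c₁) and χ₂ is a corrector for (p, c₂), then c₁ = c₂. Hence the constant c̄(|p|) for which a corrector exists is unique. -/
open Set Filter intervalIntegral
open scoped Topology

noncomputable section

/-- A corrector for `(p, c)`: a C² function `χ : ℝ → ℝ` with `χ' > 0`, `χ(z+1) = χ(z) + 1`,
satisfying `|p|²·χ''(z) − c·χ'(z) + g(χ(z)) = 0` for all `z ∈ ℝ`. -/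
def IsCorrector {n : ℕ} (g : ℝ → ℝ) (p : EuclideanSpace ℝ (Fin n)) (c : ℝ) (χ : ℝ → ℝ) : Prop :=
  ContDiff ℝ 2 χ ∧ (∀ z, 0 < deriv χ z) ∧ (∀ z, χ (z + 1) = χ z + 1) ∧
  ∀ z, ‖p‖ ^ 2 * deriv (deriv χ) z - c * deriv χ z + g (χ z) = 0

/-!
Pass to the variable `y = χ(z)`: with `u = χ⁻¹` and `ψ = χ' ∘ u`, the corrector equation becomes
the first-order equation `|p|² ψ ψ' = c ψ − g` for a positive 1-periodic `ψ`. If `c₂ < c₁`, then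
at a maximum point of `ψ₁² − ψ₂²` the derivatives cancel, leaving `c₁ ψ₁ = c₂ ψ₂`, so the maximum is
negative and `ψ₁ < ψ₂` everywhere. Hence `u₁ − u₂`, whose derivative is `1/ψ₁ − 1/ψ₂ > 0`, is
strictly increasing; but it is 1-periodic because `u₁` and `u₂` both commute with `y ↦ y + 1`.
-/

open Function

theorem Function.Periodic.exists_forall_ge_of_continuous {f : ℝ → ℝ} {T : ℝ} (hf : Periodic f T)
    (hT : T ≠ 0) (hc : Continuous f) : ∃ a, ∀ y, f y ≤ f a := by
  obtain ⟨_, ⟨a, rfl⟩, hmax⟩ :=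
    (hf.compact_of_continuous hT hc).exists_isGreatest (range_nonempty f)
  exact ⟨a, fun y => hmax ⟨y, rfl⟩⟩

section AddOne

variable {χ : ℝ → ℝ}

theorem periodic_sub_id_of_add_one (hχ : ∀ z, χ (z + 1) = χ z + 1) :
    Periodic (fun z => χ z - z) 1 := fun z => by
  simp only [hχ]
  ring

theorem periodic_deriv_of_add_one (hχ : ∀ z, χ (z + 1) = χ z + 1) : Periodic (deriv χ) 1 :=
  fun z => by
    rw [← deriv_comp_add_const, funext hχ, deriv_add_const]

theorem surjective_of_add_one (hc : Continuous χ) (hχ : ∀ z, χ (z + 1) = χ z + 1) :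
    Surjective χ := by
  obtain ⟨hlow, hup⟩ := isBounded_iff_bddBelow_bddAbove.1 <|
    (periodic_sub_id_of_add_one hχ).isBounded_of_continuous one_ne_zero (by fun_prop)
  obtain ⟨m, hm⟩ := hlow
  obtain ⟨M, hM⟩ := hup
  have hm' : ∀ z, z + m ≤ χ z := fun z => by linarith [hm ⟨z, rfl⟩]
  have hM' : ∀ z, χ z ≤ z + M := fun z => by linarith [hM ⟨z, rfl⟩]
  exact hc.surjective
    (tendsto_atTop_mono hm' (tendsto_atTop_add_const_right _ m tendsto_id))
    (tendsto_atBot_mono hM' (tendsto_atBot_add_const_right _ M tendsto_id))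

theorem exists_hasDerivAt_inverse_of_add_one (hd : Differentiable ℝ χ)
    (hpos : ∀ z, 0 < deriv χ z) (hχ : ∀ z, χ (z + 1) = χ z + 1) :
    ∃ u : ℝ → ℝ, (∀ y, χ (u y) = y) ∧ (∀ y, u (y + 1) = u y + 1) ∧
      ∀ y, HasDerivAt u (deriv χ (u y))⁻¹ y := by
  have hmono : StrictMono χ := strictMono_of_deriv_pos hpos
  let e := hmono.orderIsoOfSurjective χ (surjective_of_add_one hd.continuous hχ)
  have hinv : ∀ y, χ (e.symm y) = y := e.apply_symm_apply
  refine ⟨e.symm, hinv, fun y => hmono.injective ?_, fun y => ?_⟩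
  · rw [hinv, hχ, hinv]
  · exact HasDerivAt.of_local_left_inverse e.symm.continuous.continuousAt
      (hd _).hasDerivAt (hpos _).ne' (Eventually.of_forall hinv)

end AddOne

/-- The corrector equation in the variable `y = χ(z)`, for `ψ = χ' ∘ χ⁻¹` and `a = |p|²`. -/
structure IsPhaseProfile (a c : ℝ) (h ψ : ℝ → ℝ) : Prop where
  differentiable : Differentiable ℝ ψ
  periodic : Periodic ψ 1
  pos : ∀ y, 0 < ψ y
  ode : ∀ y, a * ψ y * deriv ψ y = c * ψ y - h y

namespace IsPhaseProfile

variable {a c c₁ c₂ : ℝ} {h ψ ψ₁ ψ₂ : ℝ → ℝ}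

theorem speed_pos (hψ : IsPhaseProfile a c h ψ) (hh : ∀ y, 0 < h y) : 0 < c := by
  obtain ⟨m, hm⟩ :=
    hψ.periodic.exists_forall_ge_of_continuous one_ne_zero hψ.differentiable.continuous
  have hcrit : deriv ψ m = 0 := IsLocalMax.deriv_eq_zero (Eventually.of_forall hm)
  have hode := hψ.ode m
  rw [hcrit, mul_zero] at hode
  nlinarith [hψ.pos m, hh m]

theorem lt_of_speed_lt (hψ₁ : IsPhaseProfile a c₁ h ψ₁) (hψ₂ : IsPhaseProfile a c₂ h ψ₂)
    (hc₂ : 0 < c₂) (hc : c₂ < c₁) (y : ℝ) : ψ₁ y < ψ₂ y := by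
  set F : ℝ → ℝ := fun y => ψ₁ y ^ 2 - ψ₂ y ^ 2
  have hF : ∀ y, HasDerivAt F
      (2 * ψ₁ y ^ 1 * deriv ψ₁ y - 2 * ψ₂ y ^ 1 * deriv ψ₂ y) y := fun y =>
    ((hψ₁.differentiable y).hasDerivAt.pow 2).sub ((hψ₂.differentiable y).hasDerivAt.pow 2)
  have hFper : Periodic F 1 := fun y => by simp only [F, hψ₁.periodic y, hψ₂.periodic y]
  obtain ⟨m, hm⟩ := hFper.exists_forall_ge_of_continuous one_ne_zero
    (continuous_iff_continuousAt.2 fun y => (hF y).continuousAt)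
  have hcrit : ψ₁ m * deriv ψ₁ m = ψ₂ m * deriv ψ₂ m := by
    linear_combination (IsLocalMax.hasDerivAt_eq_zero (Eventually.of_forall hm) (hF m)) / 2
  have hspeed : c₁ * ψ₁ m = c₂ * ψ₂ m := by
    linear_combination hψ₂.ode m - hψ₁.ode m + a * hcrit
  have hlt : ψ₁ m < ψ₂ m := by nlinarith [hψ₂.pos m]
  have hFm : F m < 0 := by
    simp only [F]
    nlinarith [hψ₁.pos m]
  exact lt_of_pow_lt_pow_left₀ 2 (hψ₂.pos y).le (by linarith [hm y])

end IsPhaseProfile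

namespace IsCorrector

variable {n : ℕ} {g : ℝ → ℝ} {p : EuclideanSpace ℝ (Fin n)} {c c₁ c₂ : ℝ} {χ χ₁ χ₂ : ℝ → ℝ}

theorem exists_phaseProfile (h : IsCorrector g p c χ) :
    ∃ u : ℝ → ℝ, (∀ y, u (y + 1) = u y + 1) ∧ (∀ y, HasDerivAt u (deriv χ (u y))⁻¹ y) ∧
      IsPhaseProfile (‖p‖ ^ 2) c g (deriv χ ∘ u) := by
  obtain ⟨hsmooth, hpos, hχ, hode⟩ := h
  obtain ⟨u, hinv, hu, hu'⟩ :=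
    exists_hasDerivAt_inverse_of_add_one (hsmooth.differentiable two_ne_zero) hpos hχ
  have hψ' : ∀ y, HasDerivAt (deriv χ ∘ u) (deriv (deriv χ) (u y) * (deriv χ (u y))⁻¹) y :=
    fun y => (hsmooth.differentiable_deriv_two (u y)).hasDerivAt.comp y (hu' y)
  refine ⟨u, hu, hu', fun y => (hψ' y).differentiableAt, fun y => ?_, fun y => hpos _, fun y => ?_⟩
  · simp only [comp_apply, hu, periodic_deriv_of_add_one hχ (u y)]
  · have hz := hode (u y)
    rw [hinv] at hz
    rw [(hψ' y).deriv, comp_apply]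
    field_simp [(hpos (u y)).ne']
    linarith

theorem speed_le (hg : ∀ y, 0 < g y) (h₁ : IsCorrector g p c₁ χ₁)
    (h₂ : IsCorrector g p c₂ χ₂) : c₁ ≤ c₂ := by
  by_contra! hlt
  obtain ⟨u₁, hu₁, hu₁', hψ₁⟩ := h₁.exists_phaseProfile
  obtain ⟨u₂, hu₂, hu₂', hψ₂⟩ := h₂.exists_phaseProfile
  have hψ := hψ₁.lt_of_speed_lt hψ₂ (hψ₂.speed_pos hg) hlt
  have hmono : StrictMono (u₁ - u₂) := strictMono_of_hasDerivAt_pos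
    (fun y => (hu₁' y).sub (hu₂' y))
    (fun y => sub_pos.2 (inv_strictAnti₀ (hψ₁.pos y) (hψ y)))
  have hper : (u₁ - u₂) 1 = (u₁ - u₂) 0 := by
    have hu₁0 := hu₁ 0
    have hu₂0 := hu₂ 0
    rw [zero_add] at hu₁0 hu₂0
    simp only [Pi.sub_apply, hu₁0, hu₂0]
    ring
  exact (hmono zero_lt_one).ne' hper

end IsCorrector

theorem statement_2_general {n : ℕ} (g : ℝ → ℝ) (hpos : ∀ y, 0 < g y)
    (p : EuclideanSpace ℝ (Fin n)) (c₁ c₂ : ℝ) (χ₁ χ₂ : ℝ → ℝ)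
    (h₁ : IsCorrector g p c₁ χ₁) (h₂ : IsCorrector g p c₂ χ₂) :
    c₁ = c₂ :=
  le_antisymm (h₁.speed_le hpos h₂) (h₂.speed_le hpos h₁)

theorem statement_2 {n : ℕ} (g : ℝ → ℝ) (hg : ∃ K, LipschitzWith K g)
    (hper : ∀ y, g (y + 1) = g y) (hpos : ∀ y, 0 < g y)
    (p : EuclideanSpace ℝ (Fin n)) (c₁ c₂ : ℝ) (χ₁ χ₂ : ℝ → ℝ)
    (h₁ : IsCorrector g p c₁ χ₁) (h₂ : IsCorrector g p c₂ χ₂) :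
    c₁ = c₂ :=
  statement_2_general g hpos p c₁ c₂ χ₁ χ₂ h₁ h₂
end
end

section
/- If p ∈ ℝ^n, p ≠ 0, and χ is a corrector for (p, c), then c = ∫₀¹ g(χ(z)) dz and c·∫₀¹ (χ'(z))² dz = ∫₀¹ g(s) ds; in particular c = (∫₀¹ g(s) ds)/(∫₀¹ (χ'(z))² dz). -/
open Set Filter intervalIntegral
open scoped Topology

noncomputable section

/-!
Integrate the corrector equation `|p|² χ'' − c χ' + g(χ) = 0` over one period, once as it stands
and once after multiplying by `χ'`. Since `χ − id` and hence `χ'` are 1-periodic, `∫₀¹ χ'' = 0`,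
`∫₀¹ χ' χ'' = [χ'²/2]₀¹ = 0` and `∫₀¹ χ' = χ(1) − χ(0) = 1`; the substitution `s = χ(z)` turns
`∫₀¹ g(χ) χ'` into `∫_{χ(0)}^{χ(0)+1} g = ∫₀¹ g` by periodicity of `g`. This leaves
`c = ∫₀¹ g(χ)` and `c ∫₀¹ χ'² = ∫₀¹ g`, and `∫₀¹ χ'² > 0` because `χ' > 0`.
-/

theorem periodic_deriv_of_add_const {f : ℝ → ℝ} {T a : ℝ}
    (h : ∀ z, f (z + T) = f z + a) : Function.Periodic (deriv f) T := fun z => by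
  rw [← deriv_comp_add_const, funext h, deriv_add_const]

theorem integral_mul_deriv_eq_zero_of_periodic {f : ℝ → ℝ} {T : ℝ} (hf : ContDiff ℝ 1 f)
    (hper : Function.Periodic f T) : ∫ z in (0 : ℝ)..T, f z * deriv f z = 0 := by
  have hderiv : ∀ z ∈ uIcc 0 T, HasDerivAt (fun z => f z ^ 2 / 2) (f z * deriv f z) z :=
    fun z _ => (((hf.differentiable one_ne_zero z).hasDerivAt.fun_pow 2).div_const 2).congr_deriv
      (by ring)
  rw [integral_eq_sub_of_hasDerivAt hderiv
    ((hf.continuous.mul hf.continuous_deriv_one).intervalIntegrable 0 T), hper.eq, sub_self]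

theorem integral_comp_mul_deriv_of_add_period {g φ : ℝ → ℝ} {T : ℝ} (hg : Continuous g)
    (hgper : Function.Periodic g T) (hφ : ContDiff ℝ 1 φ) (hφT : φ T = φ 0 + T) :
    ∫ z in (0 : ℝ)..T, g (φ z) * deriv φ z = ∫ s in (0 : ℝ)..T, g s := by
  have hshift := hgper.intervalIntegral_add_eq (φ 0) 0
  rwa [zero_add, ← hφT, ← integral_comp_mul_deriv
    (fun z _ => (hφ.differentiable one_ne_zero z).hasDerivAt)
    hφ.continuous_deriv_one.continuousOn hg] at hshift

namespace IsCorrector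

variable {n : ℕ} {g : ℝ → ℝ} {p : EuclideanSpace ℝ (Fin n)} {c : ℝ} {χ : ℝ → ℝ}

theorem contDiff_deriv (hχ : IsCorrector g p c χ) : ContDiff ℝ 1 (deriv χ) :=
  hχ.1.deriv'

theorem periodic_deriv (hχ : IsCorrector g p c χ) : Function.Periodic (deriv χ) 1 :=
  periodic_deriv_of_add_const hχ.2.2.1

theorem apply_one (hχ : IsCorrector g p c χ) : χ 1 = χ 0 + 1 := by
  simpa using hχ.2.2.1 0

theorem integral_deriv (hχ : IsCorrector g p c χ) : ∫ z in (0 : ℝ)..1, deriv χ z = 1 := by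
  rw [integral_deriv_eq_sub (fun z _ => hχ.1.differentiable two_ne_zero z)
    (hχ.contDiff_deriv.continuous.intervalIntegrable 0 1), hχ.apply_one, add_sub_cancel_left]

theorem integral_deriv_deriv (hχ : IsCorrector g p c χ) :
    ∫ z in (0 : ℝ)..1, deriv (deriv χ) z = 0 := by
  rw [integral_deriv_eq_sub (fun z _ => hχ.contDiff_deriv.differentiable one_ne_zero z)
    (hχ.contDiff_deriv.continuous_deriv_one.intervalIntegrable 0 1), sub_eq_zero,
    ← hχ.periodic_deriv 0, zero_add]

theorem eq_integral_comp (hχ : IsCorrector g p c χ) : c = ∫ z in (0 : ℝ)..1, g (χ z) := by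
  have hode : ∀ z, g (χ z) = c * deriv χ z - ‖p‖ ^ 2 * deriv (deriv χ) z := fun z => by
    linarith [hχ.2.2.2 z]
  simp_rw [hode]
  have hd := hχ.contDiff_deriv.continuous
  have hdd := hχ.contDiff_deriv.continuous_deriv_one
  rw [integral_sub (Continuous.intervalIntegrable (by fun_prop) _ _)
      (Continuous.intervalIntegrable (by fun_prop) _ _),
    integral_const_mul, integral_const_mul, hχ.integral_deriv, hχ.integral_deriv_deriv]
  ring

theorem mul_integral_deriv_sq (hχ : IsCorrector g p c χ) (hg : Continuous g)
    (hgper : Function.Periodic g 1) :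
    c * ∫ z in (0 : ℝ)..1, deriv χ z ^ 2 = ∫ s in (0 : ℝ)..1, g s := by
  have hode : ∀ z, g (χ z) * deriv χ z =
      c * deriv χ z ^ 2 - ‖p‖ ^ 2 * (deriv χ z * deriv (deriv χ) z) := fun z => by
    linear_combination deriv χ z * hχ.2.2.2 z
  have hχ' := hχ.contDiff_deriv
  rw [← integral_comp_mul_deriv_of_add_period hg hgper (hχ.1.of_le (by norm_num)) hχ.apply_one]
  simp_rw [hode]
  have hd := hχ'.continuous
  have hdd := hχ'.continuous_deriv_one
  rw [integral_sub (Continuous.intervalIntegrable (by fun_prop) _ _)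
      (Continuous.intervalIntegrable (by fun_prop) _ _),
    integral_const_mul, integral_const_mul,
    integral_mul_deriv_eq_zero_of_periodic hχ' hχ.periodic_deriv]
  ring

theorem integral_deriv_sq_pos (hχ : IsCorrector g p c χ) :
    0 < ∫ z in (0 : ℝ)..1, deriv χ z ^ 2 :=
  intervalIntegral_pos_of_pos ((hχ.contDiff_deriv.continuous.pow 2).intervalIntegrable 0 1)
    (fun z => pow_pos (hχ.2.1 z) 2) one_pos

end IsCorrector

theorem statement_3_general {n : ℕ} (g : ℝ → ℝ) (hg : ∃ K, LipschitzWith K g)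
    (hper : ∀ y, g (y + 1) = g y)
    (p : EuclideanSpace ℝ (Fin n)) (c : ℝ) (χ : ℝ → ℝ)
    (hχ : IsCorrector g p c χ) :
    c = (∫ z in (0:ℝ)..1, g (χ z)) ∧
    c * (∫ z in (0:ℝ)..1, (deriv χ z) ^ 2) = (∫ s in (0:ℝ)..1, g s) ∧
    c = (∫ s in (0:ℝ)..1, g s) / (∫ z in (0:ℝ)..1, (deriv χ z) ^ 2) := by
  obtain ⟨K, hK⟩ := hg
  have hsq := hχ.mul_integral_deriv_sq hK.continuous hper
  refine ⟨hχ.eq_integral_comp, hsq, ?_⟩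
  rw [← hsq, mul_div_cancel_right₀ _ hχ.integral_deriv_sq_pos.ne']

theorem statement_3 {n : ℕ} (g : ℝ → ℝ) (hg : ∃ K, LipschitzWith K g)
    (hper : ∀ y, g (y + 1) = g y) (hpos : ∀ y, 0 < g y)
    (p : EuclideanSpace ℝ (Fin n)) (hp : p ≠ 0) (c : ℝ) (χ : ℝ → ℝ)
    (hχ : IsCorrector g p c χ) :
    c = (∫ z in (0:ℝ)..1, g (χ z)) ∧
    c * (∫ z in (0:ℝ)..1, (deriv χ z) ^ 2) = (∫ s in (0:ℝ)..1, g s) ∧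
    c = (∫ s in (0:ℝ)..1, g s) / (∫ z in (0:ℝ)..1, (deriv χ z) ^ 2) :=
  statement_3_general g hg hper p c χ hχ
end
end

section
/- Let c > 0, a > 0, and let h : [0, ∞) → ℝ be a C² function with h(0) = 0, h'(0) = a, satisfying h''(z) + c·h'(z) − g(h(z)) = 0 for all z > 0. Then for every z ≥ 0: a·e^{−cz} + (min g / c)·(1 − e^{−cz}) ≤ h'(z) ≤ a·e^{−cz} + (max g / c)·(1 − e^{−cz}); in particular h'(z) > 0 for all z ≥ 0. -/
/-
Along a solution, `u = h'` satisfies the linear equation `u' + c u = g(h)` with right-hand side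
between `min g` and `max g`. With the integrating factor `e^{cz}`, a lower bound `m ≤ u' + c u`
makes `e^{cz} (u - m/c)` nondecreasing, which is the lower estimate after multiplying back by
`e^{-cz}`; the upper estimate is the same argument applied to `-u`.
-/

open Set

open Real in
theorem le_of_forall_le_deriv_add_mul {u u' : ℝ → ℝ} {c m : ℝ} (hc : c ≠ 0)
    (hu : ContinuousOn u (Ici 0)) (hderiv : ∀ x > 0, HasDerivAt u (u' x) x)
    (hbound : ∀ x > 0, m ≤ u' x + c * u x) {z : ℝ} (hz : 0 ≤ z) :
    u 0 * exp (-(c * z)) + m / c * (1 - exp (-(c * z))) ≤ u z := by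
  set F : ℝ → ℝ := fun t => exp (c * t) * (u t - m / c)
  have hF_deriv : ∀ x > 0, HasDerivAt F (exp (c * x) * (u' x + c * u x - m)) x := by
    intro x hx
    have hexp : HasDerivAt (fun t => exp (c * t)) (exp (c * x) * c) x := by
      simpa using ((hasDerivAt_id x).const_mul c).exp
    exact (hexp.mul ((hderiv x hx).sub_const (m / c))).congr_deriv (by field_simp; ring)
  have hF_mono : MonotoneOn F (Ici 0) := by
    refine monotoneOn_of_hasDerivWithinAt_nonneg
      (f' := fun x => exp (c * x) * (u' x + c * u x - m)) (convex_Ici 0) ?_ (fun x hx => ?_)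
      (fun x hx => ?_)
    · exact (by fun_prop : Continuous fun t => exp (c * t)).continuousOn.mul
        (hu.sub continuousOn_const)
    · rw [interior_Ici] at hx
      exact (hF_deriv x hx).hasDerivWithinAt
    · rw [interior_Ici] at hx
      exact mul_nonneg (exp_pos _).le (sub_nonneg.mpr (hbound x hx))
  have hF : F 0 ≤ F z := hF_mono self_mem_Ici hz hz
  have hexp : exp (-(c * z)) * exp (c * z) = 1 := by rw [← exp_add]; simp
  have := mul_le_mul_of_nonneg_left hF (exp_pos (-(c * z))).le
  simp only [F, mul_zero, exp_zero, one_mul, ← mul_assoc, hexp] at this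
  linarith

open Real in
theorem le_of_forall_deriv_add_mul_le {u u' : ℝ → ℝ} {c M : ℝ} (hc : c ≠ 0)
    (hu : ContinuousOn u (Ici 0)) (hderiv : ∀ x > 0, HasDerivAt u (u' x) x)
    (hbound : ∀ x > 0, u' x + c * u x ≤ M) {z : ℝ} (hz : 0 ≤ z) :
    u z ≤ u 0 * exp (-(c * z)) + M / c * (1 - exp (-(c * z))) := by
  have := le_of_forall_le_deriv_add_mul (u := -u) (u' := -u') (m := -M) hc hu.neg
    (fun x hx => (hderiv x hx).neg)
    (fun x hx => by simp only [Pi.neg_apply]; linarith [hbound x hx]) hz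
  simp only [Pi.neg_apply, neg_div] at this
  linarith

theorem statement_9_general (g : ℝ → ℝ)
    (hpos : ∀ y, 0 < g y)
    (m M : ℝ) (hm : IsLeast (Set.range g) m) (hM : IsGreatest (Set.range g) M)
    (c a : ℝ) (hc : 0 < c) (ha : 0 < a)
    (h : ℝ → ℝ) (hsm : ContDiff ℝ 2 h) (h'0 : deriv h 0 = a)
    (hode : ∀ z, 0 < z → deriv (deriv h) z + c * deriv h z - g (h z) = 0) :
    ∀ z, 0 ≤ z →
      (a * Real.exp (-(c * z)) + (m / c) * (1 - Real.exp (-(c * z))) ≤ deriv h z ∧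
        deriv h z ≤ a * Real.exp (-(c * z)) + (M / c) * (1 - Real.exp (-(c * z)))) ∧
      0 < deriv h z := by
  intro z hz
  have hdiff := hsm.differentiable_deriv_two
  have hcont : ContinuousOn (deriv h) (Ici 0) := hdiff.continuous.continuousOn
  have hderiv : ∀ x > 0, HasDerivAt (deriv h) (deriv (deriv h) x) x :=
    fun x _ => (hdiff x).hasDerivAt
  have hlower := le_of_forall_le_deriv_add_mul (m := m) hc.ne' hcont hderiv
    (fun x hx => by linarith [hode x hx, hm.2 (mem_range_self (h x))]) hz
  have hupper := le_of_forall_deriv_add_mul_le (M := M) hc.ne' hcont hderiv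
    (fun x hx => by linarith [hode x hx, hM.2 (mem_range_self (h x))]) hz
  rw [h'0] at hlower hupper
  refine ⟨⟨hlower, hupper⟩, lt_of_lt_of_le ?_ hlower⟩
  obtain ⟨y, rfl⟩ := hm.1
  have hexp_le : Real.exp (-(c * z)) ≤ 1 := Real.exp_le_one_iff.mpr (neg_nonpos.mpr (mul_nonneg hc.le hz))
  have := mul_nonneg (div_pos (hpos y) hc).le (sub_nonneg.mpr hexp_le)
  linarith [mul_pos ha (Real.exp_pos (-(c * z)))]

theorem statement_9 (g : ℝ → ℝ) (hg : ∃ K, LipschitzWith K g)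
    (hper : ∀ y, g (y + 1) = g y) (hpos : ∀ y, 0 < g y)
    (m M : ℝ) (hm : IsLeast (Set.range g) m) (hM : IsGreatest (Set.range g) M)
    (c a : ℝ) (hc : 0 < c) (ha : 0 < a)
    (h : ℝ → ℝ) (hsm : ContDiff ℝ 2 h) (h0 : h 0 = 0) (h'0 : deriv h 0 = a)
    (hode : ∀ z, 0 < z → deriv (deriv h) z + c * deriv h z - g (h z) = 0) :
    ∀ z, 0 ≤ z →
      (a * Real.exp (-(c * z)) + (m / c) * (1 - Real.exp (-(c * z))) ≤ deriv h z ∧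
        deriv h z ≤ a * Real.exp (-(c * z)) + (M / c) * (1 - Real.exp (-(c * z)))) ∧
      0 < deriv h z :=
  statement_9_general g hpos m M hm hM c a hc ha h hsm h'0 hode
end
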